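/- arXiv:1404.1861 — 2 statements merged into one kernel-verified Lean document; each statement's English description precedes it below -/
import Mathlib

section
/- Let A be a unital C*-algebra with the strong Dixmier property: for every n, every positive elements a_1, …, a_n ∈ A, and every ε > 0, there exist k ≥ 1, unitaries u_1, …, u_k ∈ A, and real numbers r_1, …, r_n such that ‖a_j‖ ≤ 4·|r_j| and ‖(1/k)·∑_{i=1}^k u_i a_j u_i* − r_j·1‖ < ε for each j = 1, …, n. Then A is simple, i.e., every closed two-sided ideal of A is either {0} or all of A. -/
/-- A unital C⋆-algebra with the strong Dixmier property is simple:
every closed two-sided ideal is `⊥` or `⊤`. -/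
theorem sdp_implies_simple (A : Type*) [CStarAlgebra A] [PartialOrder A] [StarOrderedRing A]
    (hSDP : ∀ (n : ℕ) (a : Fin n → A), (∀ j, 0 ≤ a j) → ∀ ε : ℝ, 0 < ε →
      ∃ k : ℕ, 1 ≤ k ∧ ∃ (u : Fin k → A) (r : Fin n → ℝ),
        (∀ i, u i ∈ unitary A) ∧
        (∀ j, ‖a j‖ ≤ 4 * |r j|) ∧
        (∀ j, ‖(1 / (k : ℝ)) • (∑ i, u i * a j * star (u i)) - (r j) • (1 : A)‖ < ε)) :
    ∀ I : TwoSidedIdeal A, IsClosed (I : Set A) → I = ⊥ ∨ I = ⊤ := by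
  intro I _
  by_cases hbot : I = ⊥
  · exact Or.inl hbot
  right
  -- get a nonzero element of I
  obtain ⟨x, hxI, hx0⟩ : ∃ x, x ∈ I ∧ x ≠ 0 := by
    by_contra h
    push_neg at h
    exact hbot (by
      ext y
      simp only [TwoSidedIdeal.mem_bot]
      exact ⟨fun hy => h y hy, fun hy => hy ▸ I.zero_mem⟩)
  set a : A := star x * x with ha
  have haI : a ∈ I := I.mul_mem_left _ _ hxI
  have hapos : (0 : A) ≤ a := star_mul_self_nonneg x
  have hanorm : 0 < ‖a‖ := by
    have : 0 < ‖x‖ := norm_pos_iff.mpr hx0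
    rw [ha, CStarRing.norm_star_mul_self]
    positivity
  obtain ⟨k, hk1, u, r, hu, hr, hnorm⟩ :=
    hSDP 1 (fun _ => a) (fun _ => hapos) (‖a‖ / 8) (by positivity)
  set ρ := r 0 with hρ
  have hρpos : 0 < |ρ| := by
    have := hr 0
    nlinarith [abs_nonneg ρ]
  set y : A := (1 / (k : ℝ)) • (∑ i, u i * a * star (u i)) with hy
  have hyI : y ∈ I := by
    have hsum : (∑ i, u i * a * star (u i)) ∈ I := by
      apply TwoSidedIdeal.finsetSum_mem
      intro i _
      exact I.mul_mem_right _ _ (I.mul_mem_left _ _ haI)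
    rw [hy, Algebra.smul_def]
    exact I.mul_mem_left _ _ hsum
  set z : A := ρ⁻¹ • y with hz
  have hzI : z ∈ I := by
    rw [hz, Algebra.smul_def]
    exact I.mul_mem_left _ _ hyI
  have hz1 : ‖(1 : A) - z‖ < 1 := by
    have hρne : ρ ≠ 0 := by
      intro h; rw [h] at hρpos; simp at hρpos
    have h1 : (1 : A) - z = (-ρ⁻¹) • (y - ρ • 1) := by
      rw [hz]
      match_scalars <;> field_simp
    rw [h1, norm_smul]
    have h2 := hnorm 0
    have h3 := hr 0
    have : ‖(-ρ⁻¹ : ℝ)‖ = |ρ|⁻¹ := by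
      rw [norm_neg, Real.norm_eq_abs, abs_inv]
    rw [this]
    calc |ρ|⁻¹ * ‖y - ρ • (1 : A)‖ < |ρ|⁻¹ * (‖a‖ / 8) := by
          apply mul_lt_mul_of_pos_left _ (by positivity)
          exact h2
      _ ≤ |ρ|⁻¹ * (4 * |ρ| / 8) := by
          apply mul_le_mul_of_nonneg_left _ (by positivity)
          linarith
      _ = 1 / 2 := by field_simp; ring
      _ < 1 := by norm_num
  have hunit : IsUnit z := by
    have := (Units.oneSub (1 - z) hz1).isUnit
    simpa using this
  obtain ⟨v, hv⟩ := hunit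
  have h1I : (1 : A) ∈ I := by
    have : (↑v⁻¹ : A) * z ∈ I := I.mul_mem_left _ _ hzI
    rwa [← hv, Units.inv_mul] at this
  exact I.eq_top h1I
end

section
/- Let A be a C*-algebra, let n ≥ 1, and let (a_{ij}) ∈ M_n(A). Then ‖(a_{ij})‖ = sup { ‖∑_{i=1}^n ∑_{j=1}^n x_i* a_{ij} y_j‖ : x_1, …, x_n, y_1, …, y_n ∈ A with ‖∑_{i=1}^n x_i* x_i‖ ≤ 1 and ‖∑_{i=1}^n y_i* y_i‖ ≤ 1 }, where the norm on the left is the canonical C*-norm of M_n(A) and the supremum on the right is taken in ℝ (the set of values is nonempty, as the zero tuples qualify, and bounded above). -/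
/-- The norm of a vector `v ∈ Aⁿ` in the standard Hilbert `A`-module `Aⁿ` over a C⋆-algebra `A`,
namely `‖v‖ = ‖∑ i, vᵢ* vᵢ‖ ^ (1/2)` (coming from the `A`-valued inner product
`⟪v, w⟫ = ∑ i, vᵢ* wᵢ`). -/
noncomputable def hilbertModulePiNorm {A : Type*} [NonUnitalNormedRing A] [StarRing A]
    {n : ℕ} (v : Fin n → A) : ℝ :=
  Real.sqrt ‖∑ i, star (v i) * v i‖

/-- The canonical C⋆-norm on `Mₙ(A)` for a C⋆-algebra `A`: the operator norm of the action of a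
matrix on the standard Hilbert `A`-module `Aⁿ` by matrix-vector multiplication. -/
noncomputable def matrixCStarNorm {A : Type*} [NonUnitalNormedRing A] [StarRing A]
    {n : ℕ} (M : Matrix (Fin n) (Fin n) A) : ℝ :=
  sSup {r : ℝ | ∃ v : Fin n → A, hilbertModulePiNorm v ≤ 1 ∧ r = hilbertModulePiNorm (M.mulVec v)}

open scoped InnerProductSpace Matrix WithCStarModule

/-! In a Hilbert C⋆-module the norm of `w` is the supremum of `‖⟪u, w⟫‖` over the unit ball:
Cauchy–Schwarz bounds it, and `u = w / ‖w‖` attains it. The tuples `Aⁿ` with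
`⟪x, y⟫ = ∑ xᵢ* yᵢ` form such a module, so `‖a y‖ = sup ‖∑ᵢ xᵢ* (a y)ᵢ‖` over unit `x`, and the
supremum over unit `y` of this inner supremum is the supremum over pairs `(x, y)`. -/

lemma CStarModule.isLUB_norm_inner {A E : Type*} [NonUnitalCStarAlgebra A] [PartialOrder A]
    [StarOrderedRing A] [AddCommGroup E] [Module ℂ E] [SMul A E] [Norm E] [CStarModule A E]
    (v : E) : IsLUB {‖⟪w, v⟫_A‖ | (w : E) (_ : ‖w‖ ≤ 1)} ‖v‖ := by
  rw [CStarModule.norm_eq_csSup (A := A) v]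
  refine isLUB_csSup ⟨_, 0, by simp [CStarModule.norm_zero A], rfl⟩ ⟨‖v‖, ?_⟩
  rintro _ ⟨w, hw, rfl⟩
  calc ‖⟪w, v⟫_A‖ ≤ ‖w‖ * ‖v‖ := CStarModule.norm_inner_le E
    _ ≤ 1 * ‖v‖ := by gcongr; exact CStarModule.norm_nonneg A
    _ = ‖v‖ := one_mul _

namespace HilbertModulePi

variable {A : Type*} [NonUnitalCStarAlgebra A]

/-- Mathlib's `C⋆ᵐᵒᵈ(A, ι → A)` carries `⟪v, w⟫ = ∑ wᵢ * star vᵢ`; applying `star` coordinatewise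
converts it to the convention `∑ star vᵢ * wᵢ` of `hilbertModulePiNorm`. -/
def toCStarModule {ι : Type*} (v : ι → A) : C⋆ᵐᵒᵈ(A, ι → A) :=
  (WithCStarModule.equiv A _).symm (star v)

lemma toCStarModule_surjective {ι : Type*} :
    Function.Surjective (toCStarModule (A := A) (ι := ι)) :=
  fun w => ⟨star (WithCStarModule.equiv A _ w), by simp [toCStarModule]⟩

lemma inner_toCStarModule [PartialOrder A] [StarOrderedRing A] {ι : Type*} [Fintype ι]
    (x z : ι → A) : ⟪toCStarModule x, toCStarModule z⟫_A = ∑ i, star (z i) * x i := by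
  simp [toCStarModule, WithCStarModule.pi_inner, WithCStarModule.inner_def]

variable {n : ℕ}

lemma norm_toCStarModule [PartialOrder A] [StarOrderedRing A] (v : Fin n → A) :
    ‖toCStarModule v‖ = hilbertModulePiNorm v := by
  rw [CStarModule.norm_eq_sqrt_norm_inner_self (A := A), inner_toCStarModule, hilbertModulePiNorm]

lemma toCStarModule_mulVec (M : Matrix (Fin n) (Fin n) A) (v : Fin n → A) :
    toCStarModule (M *ᵥ v) = CStarMatrix.toCLM (CStarMatrix.ofMatrix Mᴴ) (toCStarModule v) := by
  rw [CStarMatrix.toCLM_apply, toCStarModule, toCStarModule, Matrix.star_mulVec]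
  rfl

end HilbertModulePi

open HilbertModulePi

section

variable {A : Type*} [NonUnitalCStarAlgebra A] {n : ℕ}

lemma isLUB_norm_sum_star_mul (v : Fin n → A) :
    IsLUB {r | ∃ x : Fin n → A, ‖∑ i, star (x i) * x i‖ ≤ 1 ∧ r = ‖∑ i, star (x i) * v i‖}
      (hilbertModulePiNorm v) := by
  let := CStarAlgebra.spectralOrder A
  have := CStarAlgebra.spectralOrderedRing A
  convert CStarModule.isLUB_norm_inner (A := A) (toCStarModule v) using 1
  · have norm_swap (x : Fin n → A) : ‖∑ i, star (v i) * x i‖ = ‖∑ i, star (x i) * v i‖ := by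
      rw [← norm_star, star_sum]
      simp only [star_mul, star_star]
    ext r
    simp only [Set.mem_ofPred_eq, toCStarModule_surjective.exists, norm_toCStarModule,
      inner_toCStarModule, hilbertModulePiNorm, Real.sqrt_le_one, norm_swap, exists_prop, eq_comm]
  · exact (norm_toCStarModule v).symm

lemma bddAbove_hilbertModulePiNorm_mulVec (M : Matrix (Fin n) (Fin n) A) :
    BddAbove {r | ∃ v, hilbertModulePiNorm v ≤ 1 ∧ r = hilbertModulePiNorm (M *ᵥ v)} := by
  let := CStarAlgebra.spectralOrder A
  have := CStarAlgebra.spectralOrderedRing A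
  refine ⟨‖CStarMatrix.ofMatrix Mᴴ‖, ?_⟩
  rintro _ ⟨v, hv, rfl⟩
  rw [← norm_toCStarModule] at hv
  rw [← norm_toCStarModule, toCStarModule_mulVec]
  calc _ ≤ ‖CStarMatrix.toCLM (CStarMatrix.ofMatrix Mᴴ)‖ * ‖toCStarModule v‖ :=
        ContinuousLinearMap.le_opNorm _ _
    _ ≤ ‖CStarMatrix.ofMatrix Mᴴ‖ := mul_le_of_le_one_right (ContinuousLinearMap.opNorm_nonneg _) hv

end

theorem matrixCStarNorm_eq_sSup_general {A : Type*} [NonUnitalCStarAlgebra A] {n : ℕ}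
    (a : Matrix (Fin n) (Fin n) A) :
    matrixCStarNorm a =
      sSup {r : ℝ | ∃ x y : Fin n → A,
        ‖∑ i, star (x i) * x i‖ ≤ 1 ∧ ‖∑ i, star (y i) * y i‖ ≤ 1 ∧
        r = ‖∑ i, ∑ j, star (x i) * a i j * y j‖} := by
  set S := {r : ℝ | ∃ x y : Fin n → A,
    ‖∑ i, star (x i) * x i‖ ≤ 1 ∧ ‖∑ i, star (y i) * y i‖ ≤ 1 ∧
    r = ‖∑ i, ∑ j, star (x i) * a i j * y j‖}
  have sum_eq (x y : Fin n → A) :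
      ∑ i, ∑ j, star (x i) * a i j * y j = ∑ i, star (x i) * (a *ᵥ y) i := by
    simp only [Matrix.mulVec, dotProduct, Finset.mul_sum, mul_assoc]
  have le_norm : ∀ r ∈ S, r ≤ matrixCStarNorm a := by
    rintro _ ⟨x, y, hx, hy, rfl⟩
    rw [sum_eq]
    exact ((isLUB_norm_sum_star_mul (a *ᵥ y)).1 ⟨x, hx, rfl⟩).trans <|
      le_csSup (bddAbove_hilbertModulePiNorm_mulVec a) ⟨y, Real.sqrt_le_one.mpr hy, rfl⟩
  refine le_antisymm ?_ (csSup_le ⟨0, 0, 0, by simp, by simp, by simp⟩ le_norm)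
  refine csSup_le ⟨0, 0, by simp [hilbertModulePiNorm], by simp [hilbertModulePiNorm]⟩ ?_
  rintro _ ⟨y, hy, rfl⟩
  refine (isLUB_norm_sum_star_mul (a *ᵥ y)).2 ?_
  rintro _ ⟨x, hx, rfl⟩
  exact le_csSup ⟨_, le_norm⟩ ⟨x, y, hx, Real.sqrt_le_one.mp hy, by rw [sum_eq]⟩

/-- For a C⋆-algebra `A`, `n ≥ 1` and `(aᵢⱼ) ∈ Mₙ(A)`, the canonical C⋆-norm
of `(aᵢⱼ)` equals the supremum of `‖∑ᵢ∑ⱼ xᵢ* aᵢⱼ yⱼ‖` over all tuples `x, y ∈ Aⁿ` with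
`‖∑ xᵢ* xᵢ‖ ≤ 1` and `‖∑ yᵢ* yᵢ‖ ≤ 1`. -/
theorem matrixCStarNorm_eq_sSup {A : Type*} [NonUnitalCStarAlgebra A] {n : ℕ} (hn : 1 ≤ n)
    (a : Matrix (Fin n) (Fin n) A) :
    matrixCStarNorm a =
      sSup {r : ℝ | ∃ x y : Fin n → A,
        ‖∑ i, star (x i) * x i‖ ≤ 1 ∧ ‖∑ i, star (y i) * y i‖ ≤ 1 ∧
        r = ‖∑ i, ∑ j, star (x i) * a i j * y j‖} :=
  matrixCStarNorm_eq_sSup_general a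
end
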